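/- Define the quadratic forms Q₁ := −4u² − 2uv − 2v² − 10uw + 4vw − 4w², Q₂ := u² − 4uv − 3v² − 6uw + 2vw + 2w², Q₃ := −u² − 6uv + 8uw − 6vw − 3w² on ℝ³, with symmetric matrices M₁, M₂, M₃. Then: (1) for every (t₀, t₁) ∈ ℝ²∖{(0,0)}, the symmetric matrix t₀²M₁ + 2t₀t₁M₂ + t₁²M₃ has exactly one positive and two negative eigenvalues (counted with multiplicity); in particular, for every (t₀,t₁) ≠ (0,0) there exists (u,v,w) ∈ ℝ³∖{0} with t₀²Q₁ + 2t₀t₁Q₂ + t₁²Q₃ evaluated at (u,v,w) nonnegative, so the quadric surface bundle π₁ : Y → ℙ¹ is surjective on real points; (2) for every (u,v,w) ∈ ℝ³∖{0} with (Q₁Q₃ − Q₂²)(u,v,w) = 0, there is no pair (r,s) ∈ ℝ² with r² = Q₁(u,v,w), r·s = Q₂(u,v,w), s² = Q₃(u,v,w), i.e. the discriminant cover Δ̃ has no real points; (3) the polynomial −58t⁶ − 398t⁵ − 677t⁴ + 244t³ + 394t² − 24t − 108 is strictly negative for every t ∈ ℝ, i.e. the genus 2 curve Γ has no real points. -/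

import Mathlib

/-!
For `(t₀, t₁) ≠ 0` the pencil matrix `t₀²M₁ + 2t₀t₁M₂ + t₁²M₃` has negative trace and positive
determinant, the determinant being a binary sextic `F(t₀, t₁)` with no real zeros. Three real
eigenvalues with negative sum and positive product are one positive and two negative, and an
eigenvector for the positive one is a real point of the fibre of `π₁`. Since `Γ` is
`y² = -F(t, 1)`, the same positivity shows that `Γ` has no real points.

A real point `(r, s)` of `Δ̃` over `P` would make the binary form
`(a, b) ↦ a²Q₁(P) + 2abQ₂(P) + b²Q₃(P) = (ar + bs)²` nonnegative; but four choices of `(a, b)`,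
linear in `P`, give values summing to a negative definite quartic in `P`.
-/

/-- `Q₁ = −4u² − 2uv − 2v² − 10uw + 4vw − 4w²`. -/
def Q₁ (u v w : ℝ) : ℝ :=
  -4 * u ^ 2 - 2 * u * v - 2 * v ^ 2 - 10 * u * w + 4 * v * w - 4 * w ^ 2

/-- `Q₂ = u² − 4uv − 3v² − 6uw + 2vw + 2w²`. -/
def Q₂ (u v w : ℝ) : ℝ :=
  u ^ 2 - 4 * u * v - 3 * v ^ 2 - 6 * u * w + 2 * v * w + 2 * w ^ 2

/-- `Q₃ = −u² − 6uv + 8uw − 6vw − 3w²`. -/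
def Q₃ (u v w : ℝ) : ℝ :=
  -u ^ 2 - 6 * u * v + 8 * u * w - 6 * v * w - 3 * w ^ 2

/-- The symmetric matrix of `Q₁`. -/
noncomputable def M₁ : Matrix (Fin 3) (Fin 3) ℝ := !![-4, -1, -5; -1, -2, 2; -5, 2, -4]

/-- The symmetric matrix of `Q₂`. -/
noncomputable def M₂ : Matrix (Fin 3) (Fin 3) ℝ := !![1, -2, -3; -2, -3, 1; -3, 1, 2]

/-- The symmetric matrix of `Q₃`. -/
noncomputable def M₃ : Matrix (Fin 3) (Fin 3) ℝ := !![-1, -3, 4; -3, 0, -3; 4, -3, -3]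

open Matrix Finset

noncomputable def pencil (t₀ t₁ : ℝ) : Matrix (Fin 3) (Fin 3) ℝ :=
  t₀ ^ 2 • M₁ + (2 * t₀ * t₁) • M₂ + t₁ ^ 2 • M₃

def pencilForm (t₀ t₁ u v w : ℝ) : ℝ :=
  t₀ ^ 2 * Q₁ u v w + 2 * t₀ * t₁ * Q₂ u v w + t₁ ^ 2 * Q₃ u v w

lemma Matrix.IsHermitian.exists_dotProduct_mulVec_pos {n : Type*} [Fintype n] [DecidableEq n]
    {A : Matrix n n ℝ} (hA : A.IsHermitian) {i : n} (hi : 0 < hA.eigenvalues i) :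
    ∃ x ≠ 0, 0 < x ⬝ᵥ A *ᵥ x :=
  ⟨hA.eigenvectorBasis i, (WithLp.ofLp_eq_zero 2).ne.2 <| hA.eigenvectorBasis.orthonormal.ne_zero i,
    by simpa [hA.eigenvalues_eq] using hi⟩

lemma card_pos_eq_one_and_card_neg_eq_two_of_prod_pos_of_sum_neg {e : Fin 3 → ℝ}
    (hprod : 0 < e 0 * e 1 * e 2) (hsum : e 0 + e 1 + e 2 < 0) :
    #{i | 0 < e i} = 1 ∧ #{i | e i < 0} = 2 := by
  have h0 : e 0 ≠ 0 := by rintro h; simp [h] at hprod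
  have h1 : e 1 ≠ 0 := by rintro h; simp [h] at hprod
  have h2 : e 2 ≠ 0 := by rintro h; simp [h] at hprod
  rcases h0.lt_or_gt with a0 | a0 <;> rcases h1.lt_or_gt with a1 | a1 <;>
    rcases h2.lt_or_gt with a2 | a2 <;>
    first
    | linarith
    | nlinarith [mul_pos_of_neg_of_neg a0 a1]
    | nlinarith [mul_neg_of_neg_of_pos a0 a1]
    | nlinarith [mul_neg_of_pos_of_neg a0 a1]
    | nlinarith [mul_pos a0 a1]
    | simp only [card_filter, Fin.sum_univ_three, a0, a1, a2, asymm a0, asymm a1, asymm a2,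
        if_true, if_false]; norm_num

lemma Matrix.IsHermitian.card_eigenvalues_pos_eq_one_and_card_eigenvalues_neg_eq_two
    {A : Matrix (Fin 3) (Fin 3) ℝ} (hA : A.IsHermitian) (hdet : 0 < A.det) (htrace : A.trace < 0) :
    #{i | 0 < hA.eigenvalues i} = 1 ∧ #{i | hA.eigenvalues i < 0} = 2 := by
  rw [hA.det_eq_prod_eigenvalues, Fin.prod_univ_three] at hdet
  rw [hA.trace_eq_sum_eigenvalues, Fin.sum_univ_three] at htrace
  exact card_pos_eq_one_and_card_neg_eq_two_of_prod_pos_of_sum_neg hdet htrace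

lemma pencil_isHermitian (t₀ t₁ : ℝ) : (pencil t₀ t₁).IsHermitian := by
  ext i j
  fin_cases i <;> fin_cases j <;> simp [pencil, M₁, M₂, M₃]

lemma trace_pencil (t₀ t₁ : ℝ) : (pencil t₀ t₁).trace = -10 * t₀ ^ 2 - 4 * t₁ ^ 2 := by
  simp only [pencil, M₁, M₂, M₃, smul_of, smul_cons, smul_eq_mul, mul_neg, mul_one,
    Matrix.smul_empty, of_add_of, add_cons, head_cons, tail_cons, empty_add_empty, mul_zero,
    add_zero, trace_fin_three, of_apply, cons_val', cons_val_zero, cons_val_fin_one, cons_val_one,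
    Matrix.cons_val, neg_mul]
  ring

lemma det_pencil (t₀ t₁ : ℝ) : (pencil t₀ t₁).det =
    58 * t₀ ^ 6 + 398 * t₀ ^ 5 * t₁ + 677 * t₀ ^ 4 * t₁ ^ 2 - 244 * t₀ ^ 3 * t₁ ^ 3
      - 394 * t₀ ^ 2 * t₁ ^ 4 + 24 * t₀ * t₁ ^ 5 + 108 * t₁ ^ 6 := by
  simp only [pencil, M₁, M₂, M₃, smul_of, smul_cons, smul_eq_mul, mul_neg, mul_one,
    Matrix.smul_empty, of_add_of, add_cons, head_cons, tail_cons, empty_add_empty, mul_zero,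
    add_zero, det_fin_three, of_apply, cons_val', cons_val_zero, cons_val_fin_one, cons_val_one,
    Matrix.cons_val]
  ring

lemma pencilForm_eq_dotProduct_mulVec (t₀ t₁ : ℝ) (x : Fin 3 → ℝ) :
    pencilForm t₀ t₁ (x 0) (x 1) (x 2) = x ⬝ᵥ pencil t₀ t₁ *ᵥ x := by
  simp only [pencilForm, Q₁, Q₂, Q₃, dotProduct, mulVec, pencil, M₁, M₂, M₃, smul_of, smul_cons,
    smul_eq_mul, mul_neg, mul_one, Matrix.smul_empty, of_add_of, add_cons, head_cons, tail_cons,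
    empty_add_empty, mul_zero, Matrix.add_apply, of_apply, cons_val', cons_val_fin_one,
    Fin.sum_univ_three, cons_val_zero, cons_val_one, Matrix.cons_val, add_zero]
  ring

lemma sextic_pos (t : ℝ) :
    0 < 58 * t ^ 6 + 398 * t ^ 5 + 677 * t ^ 4 - 244 * t ^ 3 - 394 * t ^ 2 + 24 * t + 108 := by
  nlinarith [sq_nonneg (107 + 12 * t - 230 * t ^ 2 - 63 * t ^ 3),
    sq_nonneg (6918 * t - 3553 * t ^ 2 - 1063 * t ^ 3),
    sq_nonneg (1380511 * t ^ 2 + 404545 * t ^ 3), sq_nonneg (t ^ 3)]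

lemma trace_pencil_neg {t₀ t₁ : ℝ} (h : (t₀, t₁) ≠ (0, 0)) : (pencil t₀ t₁).trace < 0 := by
  rw [trace_pencil]
  rcases eq_or_ne t₁ 0 with rfl | ht₁
  · have ht₀ : t₀ ≠ 0 := by rintro rfl; exact h rfl
    nlinarith [sq_pos_of_ne_zero ht₀]
  · nlinarith [sq_pos_of_ne_zero ht₁, sq_nonneg t₀]

lemma det_pencil_pos {t₀ t₁ : ℝ} (h : (t₀, t₁) ≠ (0, 0)) : 0 < (pencil t₀ t₁).det := by
  rw [det_pencil]
  rcases eq_or_ne t₁ 0 with rfl | ht₁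
  · have ht₀ : t₀ ≠ 0 := by rintro rfl; exact h rfl
    have : 0 < t₀ ^ 6 := by positivity
    linarith
  · have := mul_pos (pow_pos (sq_pos_of_ne_zero ht₁) 3) (sextic_pos (t₀ / t₁))
    field_simp at this
    linarith

lemma pencilForm_nonneg_of_sq {u v w r s : ℝ} (h₁ : r ^ 2 = Q₁ u v w) (h₂ : r * s = Q₂ u v w)
    (h₃ : s ^ 2 = Q₃ u v w) (a b : ℝ) : 0 ≤ pencilForm a b u v w := by
  rw [pencilForm, ← h₁, ← h₂, ← h₃]
  linear_combination sq_nonneg (a * r + b * s)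

lemma sq_add_sq_add_sq_pos {u v w : ℝ} (h : (u, v, w) ≠ (0, 0, 0)) :
    0 < u ^ 2 + v ^ 2 + w ^ 2 := by
  contrapose! h
  simp only [Prod.mk.injEq]
  refine ⟨?_, ?_, ?_⟩ <;> nlinarith [sq_nonneg u, sq_nonneg v, sq_nonneg w]

lemma exists_pencilForm_neg {u v w : ℝ} (h : (u, v, w) ≠ (0, 0, 0)) :
    ∃ a b, pencilForm a b u v w < 0 := by
  by_contra! hnonneg
  have hP := pow_pos (sq_add_sq_add_sq_pos h) 2
  have h₁ := hnonneg (-19 * u + 38 * v + 2 * w) (19 * u - 42 * v - 9 * w)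
  have h₂ := hnonneg (-25 * u + 56 * v + 11 * w) (2 * u + 4 * v - 8 * w)
  have h₃ := hnonneg (12 * u - 28 * v - 2 * w) (8 * u - 11 * v - 12 * w)
  have h₄ := hnonneg (-u + 13 * v + 16 * w) (13 * u + 11 * v - 3 * w)
  simp only [pencilForm, Q₁, Q₂, Q₃] at h₁ h₂ h₃ h₄
  linarith [sq_nonneg (5378*u^2 - 2952*v^2 - 402*w^2 - 10340*u*v - 921*u*w - 6295*v*w),
    sq_nonneg (9464308*v^2 - 5436241*w^2 + 3493935*u*v + 12994486*u*w - 15344359*v*w),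
    sq_nonneg (12897223359*w^2 + 7443021939*u*v - 6455679490*u*w + 23327303393*v*w),
    sq_nonneg (10955297368132*u*v - 15520131331187*u*w + 17549328550290*v*w),
    sq_nonneg (44681846047152619*u*w + 48265103034000412*v*w),
    sq_nonneg (v*w)]

lemma pencil_eigenvalue_counts {t₀ t₁ : ℝ} (h : (t₀, t₁) ≠ (0, 0)) :
    #{i | 0 < (pencil_isHermitian t₀ t₁).eigenvalues i} = 1 ∧
    #{i | (pencil_isHermitian t₀ t₁).eigenvalues i < 0} = 2 :=
  (pencil_isHermitian t₀ t₁).card_eigenvalues_pos_eq_one_and_card_eigenvalues_neg_eq_two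
    (det_pencil_pos h) (trace_pencil_neg h)

/-- For the two-nested-ovals example `Q₁ = −4u²−2uv−2v²−10uw+4vw−4w²`,
`Q₂ = u²−4uv−3v²−6uw+2vw+2w²`, `Q₃ = −u²−6uv+8uw−6vw−3w²`:
(1) for every `(t₀,t₁) ≠ (0,0)` the symmetric matrix `t₀²M₁ + 2t₀t₁M₂ + t₁²M₃` has exactly
one positive and two negative eigenvalues; in particular the quadric surface bundle
`π₁ : Y → ℙ¹` is surjective on real points; (2) the discriminant cover `Δ̃` has no real
points; (3) the polynomial `−58t⁶ − 398t⁵ − 677t⁴ + 244t³ + 394t² − 24t − 108` is strictly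
negative on `ℝ`, i.e. the genus 2 curve `Γ` has no real points. -/
theorem rational_two_nested_ovals_example :
    (∀ t₀ t₁ : ℝ, (t₀, t₁) ≠ (0, 0) →
      ∃ h : (t₀ ^ 2 • M₁ + (2 * t₀ * t₁) • M₂ + t₁ ^ 2 • M₃).IsHermitian,
        (Finset.univ.filter fun i => 0 < h.eigenvalues i).card = 1 ∧
        (Finset.univ.filter fun i => h.eigenvalues i < 0).card = 2) ∧
    (∀ t₀ t₁ : ℝ, (t₀, t₁) ≠ (0, 0) →
      ∃ u v w : ℝ, (u, v, w) ≠ (0, 0, 0) ∧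
        0 ≤ t₀ ^ 2 * Q₁ u v w + 2 * t₀ * t₁ * Q₂ u v w + t₁ ^ 2 * Q₃ u v w) ∧
    (∀ u v w : ℝ, (u, v, w) ≠ (0, 0, 0) →
      Q₁ u v w * Q₃ u v w - Q₂ u v w ^ 2 = 0 →
      ¬ ∃ r s : ℝ, r ^ 2 = Q₁ u v w ∧ r * s = Q₂ u v w ∧ s ^ 2 = Q₃ u v w) ∧
    (∀ t : ℝ, -58 * t ^ 6 - 398 * t ^ 5 - 677 * t ^ 4 + 244 * t ^ 3 + 394 * t ^ 2
        - 24 * t - 108 < 0) := by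
  refine ⟨fun t₀ t₁ h => ⟨pencil_isHermitian t₀ t₁, pencil_eigenvalue_counts h⟩,
    fun t₀ t₁ h => ?_, fun u v w h _ => ?_, fun t => by linarith [sextic_pos t]⟩
  · obtain ⟨i, hi⟩ := one_le_card.1 (pencil_eigenvalue_counts h).1.ge
    obtain ⟨x, hx, hpos⟩ :=
      (pencil_isHermitian t₀ t₁).exists_dotProduct_mulVec_pos (mem_filter.1 hi).2
    refine ⟨x 0, x 1, x 2, fun hx0 => hx ?_, ?_⟩
    · simp only [Prod.mk.injEq] at hx0
      ext i
      fin_cases i <;> simp [hx0]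
    · exact (pencilForm_eq_dotProduct_mulVec t₀ t₁ x ▸ hpos).le
  · rintro ⟨r, s, h₁, h₂, h₃⟩
    obtain ⟨a, b, hneg⟩ := exists_pencilForm_neg h
    exact (pencilForm_nonneg_of_sq h₁ h₂ h₃ a b).not_gt hneg
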